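/- For all t > 0: cosh(2t)/3 + 2/3 - (8/81)t²(cosh(2t) - 1) ≤ sinh(2t)/(2t) ≤ cosh(2t)/3 + 2/3. -/

import Mathlib

/-!
With `x = 2t`, multiplying both bounds by `3x` turns them into `0 ≤ F(x)` for explicit
combinations `F` of `x`, `x ^ 3`, `sinh x` and `cosh x`. Each such `F` vanishes at `0` together
with its first two derivatives, and its third derivative is visibly nonnegative on `[0, ∞)`;
integrating three times gives `F ≥ 0` there.
-/

open Real Set

lemma nonneg_of_hasDerivAt_of_nonneg {f f' : ℝ → ℝ} {a x : ℝ}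
    (hf : ∀ y ∈ Ici a, HasDerivAt f (f' y) y) (ha : f a = 0)
    (hf' : ∀ y ∈ Ici a, 0 ≤ f' y) (hx : a ≤ x) : 0 ≤ f x := by
  have hmono : MonotoneOn f (Ici a) := by
    refine monotoneOn_of_hasDerivWithinAt_nonneg (convex_Ici a)
      (fun y hy => (hf y hy).continuousAt.continuousWithinAt)
      (fun y hy => (hf y (interior_subset hy)).hasDerivWithinAt)
      (fun y hy => hf' y (interior_subset hy))
  exact ha ▸ hmono self_mem_Ici hx hx

namespace Real

variable {x : ℝ}

lemma sinh_le_mul_cosh (hx : 0 ≤ x) : sinh x ≤ x * cosh x := by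
  refine sub_nonneg.mp <| nonneg_of_hasDerivAt_of_nonneg (f := fun y => y * cosh y - sinh y)
    (fun y _ => ?_) (by simp) (fun y hy => mul_nonneg hy (sinh_nonneg_iff.mpr hy)) hx
  exact (((hasDerivAt_id' y).mul (hasDerivAt_cosh y)).sub (hasDerivAt_sinh y)).congr_deriv (by ring)

lemma two_mul_cosh_le_mul_sinh_add_two (hx : 0 ≤ x) : 2 * cosh x ≤ x * sinh x + 2 := by
  refine sub_nonneg.mp <| nonneg_of_hasDerivAt_of_nonneg
    (f := fun y => y * sinh y + 2 - 2 * cosh y) (fun y _ => ?_) (by simp)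
    (fun y hy => sub_nonneg.mpr (sinh_le_mul_cosh hy)) hx
  exact ((((hasDerivAt_id' y).mul (hasDerivAt_sinh y)).add_const 2).sub
    ((hasDerivAt_cosh y).const_mul 2)).congr_deriv (by ring)

lemma three_mul_sinh_le_mul_cosh_add_two_mul (hx : 0 ≤ x) :
    3 * sinh x ≤ x * cosh x + 2 * x := by
  refine sub_nonneg.mp <| nonneg_of_hasDerivAt_of_nonneg
    (f := fun y => y * cosh y + 2 * y - 3 * sinh y) (fun y _ => ?_) (by simp)
    (fun y hy => sub_nonneg.mpr (two_mul_cosh_le_mul_sinh_add_two hy)) hx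
  exact ((((hasDerivAt_id' y).mul (hasDerivAt_cosh y)).add
    ((hasDerivAt_id' y).const_mul 2)).sub ((hasDerivAt_sinh y).const_mul 3)).congr_deriv (by ring)

lemma simpson_lower_gap_deriv2_nonneg (hx : 0 ≤ x) :
    0 ≤ sinh x - 5 / 9 * x * cosh x - 4 / 9 * x + 4 / 9 * x ^ 2 * sinh x
      + 2 / 27 * x ^ 3 * cosh x := by
  refine nonneg_of_hasDerivAt_of_nonneg (f := fun y => sinh y - 5 / 9 * y * cosh y - 4 / 9 * y
      + 4 / 9 * y ^ 2 * sinh y + 2 / 27 * y ^ 3 * cosh y)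
    (f' := fun y => 4 / 9 * (cosh y - 1) + 1 / 3 * y * sinh y + 2 / 3 * y ^ 2 * cosh y
      + 2 / 27 * y ^ 3 * sinh y) (fun y _ => ?_) (by simp) (fun y hy => ?_) hx
  · have h := (((hasDerivAt_sinh y).sub (((hasDerivAt_id' y).const_mul (5 / 9)).mul
      (hasDerivAt_cosh y))).sub ((hasDerivAt_id' y).const_mul (4 / 9))).add
      (((hasDerivAt_pow 2 y).const_mul (4 / 9)).mul (hasDerivAt_sinh y))
    exact (h.add (((hasDerivAt_pow 3 y).const_mul (2 / 27)).mul (hasDerivAt_cosh y))).congr_deriv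
      (by norm_num; ring)
  · have hs := sinh_nonneg_iff.mpr hy
    linarith [one_le_cosh y, mul_nonneg hy hs, mul_nonneg (sq_nonneg y) (cosh_pos y).le,
      mul_nonneg (pow_nonneg hy 3) hs]

lemma simpson_lower_gap_deriv_nonneg (hx : 0 ≤ x) :
    0 ≤ 2 * cosh x - x * sinh x - 2 + 2 / 9 * x ^ 2 * (cosh x - 1)
      + 2 / 27 * x ^ 3 * sinh x := by
  refine nonneg_of_hasDerivAt_of_nonneg (f := fun y => 2 * cosh y - y * sinh y - 2
      + 2 / 9 * y ^ 2 * (cosh y - 1) + 2 / 27 * y ^ 3 * sinh y) (fun y _ => ?_) (by simp)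
    (fun y hy => simpson_lower_gap_deriv2_nonneg hy) hx
  have h := ((((hasDerivAt_cosh y).const_mul 2).sub
    ((hasDerivAt_id' y).mul (hasDerivAt_sinh y))).sub_const 2).add
    (((hasDerivAt_pow 2 y).const_mul (2 / 9)).mul ((hasDerivAt_cosh y).sub_const 1))
  exact (h.add (((hasDerivAt_pow 3 y).const_mul (2 / 27)).mul (hasDerivAt_sinh y))).congr_deriv
    (by norm_num; ring)

lemma simpson_lower_gap_nonneg (hx : 0 ≤ x) :
    0 ≤ 3 * sinh x - x * cosh x - 2 * x + 2 / 27 * x ^ 3 * (cosh x - 1) := by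
  refine nonneg_of_hasDerivAt_of_nonneg (f := fun y => 3 * sinh y - y * cosh y - 2 * y
      + 2 / 27 * y ^ 3 * (cosh y - 1)) (fun y _ => ?_) (by simp)
    (fun y hy => simpson_lower_gap_deriv_nonneg hy) hx
  have h := (((hasDerivAt_sinh y).const_mul 3).sub
    ((hasDerivAt_id' y).mul (hasDerivAt_cosh y))).sub ((hasDerivAt_id' y).const_mul 2)
  exact (h.add (((hasDerivAt_pow 3 y).const_mul (2 / 27)).mul
    ((hasDerivAt_cosh y).sub_const 1))).congr_deriv (by norm_num; ring)

end Real

theorem simpson_stmt15 (t : ℝ) (ht : 0 < t) :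
    Real.cosh (2 * t) / 3 + 2 / 3 - 8 / 81 * t ^ 2 * (Real.cosh (2 * t) - 1) ≤
        Real.sinh (2 * t) / (2 * t) ∧
      Real.sinh (2 * t) / (2 * t) ≤ Real.cosh (2 * t) / 3 + 2 / 3 := by
  have hx : 0 < 2 * t := by positivity
  have hlower := simpson_lower_gap_nonneg hx.le
  have hupper := three_mul_sinh_le_mul_cosh_add_two_mul hx.le
  constructor
  · rw [le_div_iff₀ hx]
    linarith
  · rw [div_le_iff₀ hx]
    linarith
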